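/- For a symmetric zero-diagonal matrix B ∈ R^{2n×2n} with n ≥ 1, haf(B) = B_{1,2} · haf(B') + Σ_{2 < j < k ≤ 2n} (B_{1,j}B_{2,k} + B_{1,k}B_{2,j}) · haf(B'_{jk}), where B' is B with rows/columns 1 and 2 removed and B'_{jk} is B with rows/columns 1, 2, j, k removed. -/

import Mathlib

open scoped Classical
open Matrix

noncomputable def hafnian {R : Type*} [CommRing R] {m : ℕ}
    (B : Matrix (Fin m) (Fin m) R) : R :=
  ∑ σ ∈ Finset.univ.filter (fun σ : Equiv.Perm (Fin m) => σ * σ = 1 ∧ ∀ i, σ i ≠ i),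
    ∏ i ∈ Finset.univ.filter (fun i : Fin m => (i : ℕ) < (σ i : ℕ)), B i (σ i)

noncomputable def delFour {n : ℕ} (j k : Fin (2 * n + 2))
    (h1 : 1 < (j : ℕ)) (h2 : (j : ℕ) < (k : ℕ)) :
    Fin (2 * n - 2) ↪o Fin (2 * n + 2) :=
  ((((Finset.univ.erase 0).erase 1).erase j).erase k).orderEmbOfFin (by
    have hk := k.isLt
    rw [Finset.card_erase_of_mem, Finset.card_erase_of_mem, Finset.card_erase_of_mem,
      Finset.card_erase_of_mem, Finset.card_univ, Fintype.card_fin]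
    · omega
    all_goals simp only [Finset.mem_erase, Finset.mem_univ, and_true, ne_eq, Fin.ext_iff, Fin.val_zero,
      Fin.val_one]
    all_goals omega)

/-!
Sort the perfect matchings of `{0, …, 2n+1}` by the partners of `0` and `1`: either `0` is
matched with `1`, or `{σ 0, σ 1} = {j, k}` with `1 < j < k`, in one of two ways. Each class is
the set of perfect matchings extending a fixed partial matching `τ`, and these correspond
bijectively to the perfect matchings of the vertices `τ` leaves unmatched. Enumerating those
vertices increasingly keeps the smaller endpoint of every pair the smaller one, so the weight of
each such matching is the weight of `τ` times the weight of a matching of the submatrix.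
-/

open Equiv Finset

section Matchings

variable {R : Type*} [CommRing R]

def perfectMatchings (m : ℕ) : Finset (Perm (Fin m)) :=
  univ.filter fun σ => σ * σ = 1 ∧ ∀ i, σ i ≠ i

def matchingWeight {m : ℕ} (B : Matrix (Fin m) (Fin m) R) (σ : Perm (Fin m)) : R :=
  ∏ i ∈ univ.filter (fun i : Fin m => (i : ℕ) < (σ i : ℕ)), B i (σ i)

theorem hafnian_eq_sum_matchingWeight {m : ℕ} (B : Matrix (Fin m) (Fin m) R) :
    hafnian B = ∑ σ ∈ perfectMatchings m, matchingWeight B σ :=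
  rfl

theorem mem_perfectMatchings {m : ℕ} {σ : Perm (Fin m)} :
    σ ∈ perfectMatchings m ↔ Function.Involutive σ ∧ ∀ i, σ i ≠ i := by
  simp [perfectMatchings, Function.Involutive, Perm.ext_iff]

theorem matchingWeight_one {m : ℕ} (B : Matrix (Fin m) (Fin m) R) : matchingWeight B 1 = 1 := by
  simp [matchingWeight]

section SwapMul

variable {α : Type*} [DecidableEq α] {τ : Perm α} {x y : α}

theorem swap_mul_apply_of_ne (hx : τ x = x) (hy : τ y = y) {z : α} (hzx : z ≠ x)
    (hzy : z ≠ y) : (swap x y * τ) z = τ z :=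
  swap_apply_of_ne_of_ne (fun h => hzx (τ.injective (h.trans hx.symm)))
    (fun h => hzy (τ.injective (h.trans hy.symm)))

theorem swap_mul_apply_eq_self_iff (hxy : x ≠ y) (hx : τ x = x) (hy : τ y = y) {z : α} :
    (swap x y * τ) z = z ↔ z ≠ x ∧ z ≠ y ∧ τ z = z := by
  by_cases hzx : z = x
  · subst hzx; simp [hx, hxy.symm]
  by_cases hzy : z = y
  · subst hzy; simp [hy, hxy]
  simp [swap_mul_apply_of_ne hx hy hzx hzy, hzx, hzy]

theorem involutive_swap_mul (hτ : Function.Involutive τ) (hx : τ x = x) (hy : τ y = y) :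
    Function.Involutive (swap x y * τ) := by
  intro z
  by_cases hzx : z = x
  · subst hzx; simp [hx, hy]
  by_cases hzy : z = y
  · subst hzy; simp [hx, hy]
  have hτx : τ z ≠ x := fun h => hzx (τ.injective (h.trans hx.symm))
  have hτy : τ z ≠ y := fun h => hzy (τ.injective (h.trans hy.symm))
  rw [swap_mul_apply_of_ne hx hy hzx hzy, swap_mul_apply_of_ne hx hy hτx hτy, hτ z]

theorem extends_swap_mul_iff {σ : Perm α} (hσ : Function.Involutive σ) (hxy : x ≠ y)
    (hx : τ x = x) (hy : τ y = y) :
    (∀ z, (swap x y * τ) z ≠ z → σ z = (swap x y * τ) z) ↔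
      σ x = y ∧ ∀ z, τ z ≠ z → σ z = τ z := by
  constructor
  · intro h
    refine ⟨by simpa [hx] using h x (by simp [hx, hxy.symm]), fun z hz => ?_⟩
    have hzx : z ≠ x := by rintro rfl; exact hz hx
    have hzy : z ≠ y := by rintro rfl; exact hz hy
    rw [← swap_mul_apply_of_ne hx hy hzx hzy] at hz ⊢
    exact h z hz
  · rintro ⟨hσx, h⟩ z hz
    by_cases hzx : z = x
    · subst hzx; simp [hx, hσx]
    by_cases hzy : z = y
    · rw [hzy, Perm.mul_apply, hy, swap_apply_right, ← hσx, hσ x]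
    rw [swap_mul_apply_of_ne hx hy hzx hzy] at hz ⊢
    exact h z hz

theorem swap_apply_eq_self_iff (hxy : x ≠ y) {z : α} :
    swap x y z = z ↔ z ≠ x ∧ z ≠ y := by
  simpa using swap_mul_apply_eq_self_iff (τ := 1) hxy rfl rfl (z := z)

theorem extends_swap_iff {σ : Perm α} (hσ : Function.Involutive σ) (hxy : x ≠ y) :
    (∀ z, swap x y z ≠ z → σ z = swap x y z) ↔ σ x = y := by
  simpa using extends_swap_mul_iff (τ := 1) hσ hxy rfl rfl

end SwapMul

theorem matchingWeight_swap_mul {m : ℕ} (B : Matrix (Fin m) (Fin m) R) {τ : Perm (Fin m)}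
    {x y : Fin m} (hxy : x < y) (hx : τ x = x) (hy : τ y = y) :
    matchingWeight B (swap x y * τ) = B x y * matchingWeight B τ := by
  have hne : ∀ z : Fin m, (z : ℕ) < τ z → z ≠ x ∧ z ≠ y := by
    rintro z hz
    constructor <;> rintro rfl <;> simp_all
  have hfilter : univ.filter (fun z : Fin m => (z : ℕ) < ((swap x y * τ) z : ℕ)) =
      insert x (univ.filter fun z : Fin m => (z : ℕ) < τ z) := by
    ext z
    simp only [mem_filter, mem_univ, true_and, mem_insert]
    by_cases hzx : z = x
    · subst hzx; simpa [hx] using hxy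
    by_cases hzy : z = y
    · subst hzy; simp [hy, hzx, hxy.le]
    simp [swap_mul_apply_of_ne hx hy hzx hzy, hzx]
  rw [matchingWeight, hfilter, prod_insert (by simp [hx])]
  congr 1
  · simp [hx]
  · refine prod_congr rfl fun z hz => ?_
    obtain ⟨hzx, hzy⟩ := hne z (mem_filter.1 hz).2
    rw [swap_mul_apply_of_ne hx hy hzx hzy]

theorem matchingWeight_swap {m : ℕ} (B : Matrix (Fin m) (Fin m) R) {x y : Fin m}
    (hxy : x < y) : matchingWeight B (swap x y) = B x y := by
  simpa [matchingWeight_one] using matchingWeight_swap_mul B (τ := 1) hxy rfl rfl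

section Extension

/- A partial matching is encoded as an involution `τ`; its fixed points are the unmatched
vertices. -/
variable {m M : ℕ} {τ : Perm (Fin M)} {e : Fin m → Fin M}

theorem matchingWeight_eq_mul_submatrix (B : Matrix (Fin M) (Fin M) R) (he : StrictMono e)
    (hrange : Set.range e = {x | τ x = x}) {σ : Perm (Fin M)} {ρ : Perm (Fin m)}
    (hστ : ∀ x, τ x ≠ x → σ x = τ x) (hσρ : ∀ i, σ (e i) = e (ρ i)) :
    matchingWeight B σ = matchingWeight B τ * matchingWeight (B.submatrix e e) ρ := by
  set g : Perm (Fin M) → Fin M → R := fun π x => if (x : ℕ) < π x then B x (π x) else 1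
  have hw : ∀ π, matchingWeight B π = ∏ x, g π x := fun π => prod_filter _ _
  have hcompl : τ.supportᶜ = univ.map ⟨e, he.injective⟩ := by
    ext x
    simp [Perm.mem_support, ← Set.mem_range, hrange]
  rw [hw, hw, ← prod_compl_mul_prod τ.support, mul_comm]
  congr 1
  · refine (prod_congr rfl fun x hx => ?_).trans
      (prod_subset (subset_univ _) fun x _ hx => by simp [g, Perm.notMem_support.1 hx])
    simp [g, hστ x (Perm.mem_support.1 hx)]
  · rw [hcompl, prod_map, matchingWeight, prod_filter]
    refine prod_congr rfl fun i _ => ?_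
    simp [g, hσρ, he.lt_iff_lt]

theorem exists_perfectMatching_restrict (he : Function.Injective e)
    (hrange : Set.range e = {x | τ x = x}) {σ : Perm (Fin M)} (hσ : σ ∈ perfectMatchings M)
    (hστ : ∀ x, τ x ≠ x → σ x = τ x) :
    ∃ ρ ∈ perfectMatchings m, ∀ i, σ (e i) = e (ρ i) := by
  obtain ⟨hσ, hfix⟩ := mem_perfectMatchings.1 hσ
  have hmaps : ∀ i, ∃ j, e j = σ (e i) := by
    intro i
    have hτe : τ (e i) = e i := hrange.subset (Set.mem_range_self i)
    rw [← Set.mem_range, hrange]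
    by_contra h
    have hσσ := hστ _ h
    rw [hσ] at hσσ
    exact hfix (e i) (τ.injective (hσσ.symm.trans hτe.symm))
  choose r hr using hmaps
  have hr_inv : Function.Involutive r := fun i => he (by rw [hr, hr, hσ])
  refine ⟨hr_inv.toPerm r, mem_perfectMatchings.2 ⟨hr_inv, fun i hi => hfix (e i) ?_⟩,
    fun i => (hr i).symm⟩
  rw [← hr]
  exact congrArg e hi

theorem exists_perfectMatching_extend (hτ : Function.Involutive τ) (he : Function.Injective e)
    (hrange : Set.range e = {x | τ x = x}) {ρ : Perm (Fin m)} (hρ : ρ ∈ perfectMatchings m) :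
    ∃ σ ∈ perfectMatchings M,
      (∀ x, τ x ≠ x → σ x = τ x) ∧ ∀ i, σ (e i) = e (ρ i) := by
  obtain ⟨hρ, hfix⟩ := mem_perfectMatchings.1 hρ
  have hτe : ∀ i, τ (e i) = e i := fun i => hrange.subset (Set.mem_range_self i)
  set σ := τ * ρ.extendDomain (Equiv.ofInjective e he)
  have hσe : ∀ i, σ (e i) = e (ρ i) := fun i => by
    simpa [σ, hτe] using congrArg τ (ρ.extendDomain_apply_image (Equiv.ofInjective e he) i)
  have hστ : ∀ x, τ x ≠ x → σ x = τ x := fun x hx => by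
    rw [Perm.mul_apply, Perm.extendDomain_apply_not_subtype _ _ (by rwa [hrange])]
  refine ⟨σ, mem_perfectMatchings.2 ⟨fun x => ?_, fun x => ?_⟩, hστ, hσe⟩ <;>
    by_cases hx : τ x = x
  · obtain ⟨i, rfl⟩ : x ∈ Set.range e := by rwa [hrange]
    rw [hσe, hσe, hρ]
  · rw [hστ x hx, hστ (τ x) (fun h => hx (τ.injective h)), hτ x]
  · obtain ⟨i, rfl⟩ : x ∈ Set.range e := by rwa [hrange]
    rw [hσe]
    exact fun h => hfix i (he h)
  · rwa [hστ x hx]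

theorem sum_matchingWeight_extends (B : Matrix (Fin M) (Fin M) R) (hτ : Function.Involutive τ)
    (he : StrictMono e) (hrange : Set.range e = {x | τ x = x}) :
    ∑ σ ∈ perfectMatchings M with ∀ x, τ x ≠ x → σ x = τ x, matchingWeight B σ =
      matchingWeight B τ * hafnian (B.submatrix e e) := by
  rw [hafnian_eq_sum_matchingWeight, mul_sum]
  have hrestrict : ∀ σ ∈ {σ ∈ perfectMatchings M | ∀ x, τ x ≠ x → σ x = τ x},
      ∃ ρ ∈ perfectMatchings m, ∀ i, σ (e i) = e (ρ i) := fun σ hσ =>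
    exists_perfectMatching_restrict he.injective hrange (mem_filter.1 hσ).1 (mem_filter.1 hσ).2
  choose! ρ hρ hσρ using hrestrict
  refine sum_nbij ρ hρ (fun σ₁ h₁ σ₂ h₂ h => ?_) (fun ρ₀ hρ₀ => ?_)
    (fun σ hσ => matchingWeight_eq_mul_submatrix B he hrange (mem_filter.1 hσ).2 (hσρ σ hσ))
  · ext x
    by_cases hx : τ x = x
    · obtain ⟨i, rfl⟩ : x ∈ Set.range e := by rwa [hrange]
      rw [hσρ σ₁ h₁, hσρ σ₂ h₂, h]
    · rw [(mem_filter.1 h₁).2 x hx, (mem_filter.1 h₂).2 x hx]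
  · obtain ⟨σ, hσ, hστ, hσρ₀⟩ :=
      exists_perfectMatching_extend hτ he.injective hrange hρ₀
    have hσS : σ ∈ {σ ∈ perfectMatchings M | ∀ x, τ x ≠ x → σ x = τ x} :=
      mem_filter.2 ⟨hσ, hστ⟩
    refine ⟨σ, hσS, Perm.ext fun i => he.injective ?_⟩
    rw [← hσρ σ hσS, hσρ₀]

end Extension

theorem sum_matchingWeight_map_zero_eq_one {m : ℕ} (B : Matrix (Fin (m + 2)) (Fin (m + 2)) R) :
    ∑ σ ∈ perfectMatchings (m + 2) with σ 0 = 1, matchingWeight B σ =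
      B 0 1 * hafnian (B.submatrix (fun i : Fin m => i.succ.succ)
        (fun i : Fin m => i.succ.succ)) := by
  have hrange : Set.range (fun i : Fin m => i.succ.succ) =
      {x | swap (0 : Fin (m + 2)) 1 x = x} := by
    ext x
    rw [Set.mem_ofPred_eq, swap_apply_eq_self_iff Fin.zero_ne_one]
    constructor
    · rintro ⟨i, rfl⟩
      exact ⟨Fin.succ_ne_zero _, Fin.succ_succ_ne_one _⟩
    · rintro ⟨h0, h1⟩
      rw [ne_eq, Fin.ext_iff, Fin.val_zero] at h0
      rw [ne_eq, Fin.ext_iff, Fin.val_one] at h1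
      exact ⟨⟨x - 2, by omega⟩, Fin.ext (by simp only [Fin.val_succ]; omega)⟩
  have key := sum_matchingWeight_extends B (swap_apply_self 0 1)
    (e := fun i : Fin m => i.succ.succ) (Fin.strictMono_succ.comp Fin.strictMono_succ) hrange
  rw [matchingWeight_swap B Fin.zero_lt_one] at key
  rw [← key]
  refine sum_congr (filter_congr fun σ hσ => ?_) fun _ _ => rfl
  rw [extends_swap_iff (mem_perfectMatchings.1 hσ).1 Fin.zero_ne_one]

theorem sum_matchingWeight_map_zero_map_one {m k : ℕ}
    (B : Matrix (Fin (m + 2)) (Fin (m + 2)) R) {a b : Fin (m + 2)} (ha : 1 < a) (hb : 1 < b)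
    (hab : a ≠ b) {e : Fin k → Fin (m + 2)} (he : StrictMono e)
    (hrange : Set.range e = {0, 1, a, b}ᶜ) :
    ∑ σ ∈ perfectMatchings (m + 2) with σ 0 = a ∧ σ 1 = b, matchingWeight B σ =
      B 0 a * B 1 b * hafnian (B.submatrix e e) := by
  have h0a : (0 : Fin (m + 2)) < a := Fin.zero_lt_one.trans ha
  have h0 : swap 1 b 0 = 0 :=
    swap_apply_of_ne_of_ne Fin.zero_ne_one (Fin.zero_lt_one.trans hb).ne
  have h1 : swap 1 b a = a := swap_apply_of_ne_of_ne ha.ne' hab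
  have key := sum_matchingWeight_extends B (involutive_swap_mul (swap_apply_self 1 b) h0 h1) he
    (by
      ext x
      rw [hrange, Set.mem_ofPred_eq, swap_mul_apply_eq_self_iff h0a.ne h0 h1,
        swap_apply_eq_self_iff hb.ne]
      simp only [Set.mem_compl_iff, Set.mem_insert_iff, Set.mem_singleton_iff]
      tauto)
  rw [matchingWeight_swap_mul B h0a h0 h1, matchingWeight_swap B hb] at key
  rw [← key]
  refine sum_congr (filter_congr fun σ hσ => ?_) fun _ _ => rfl
  have hσ := (mem_perfectMatchings.1 hσ).1
  rw [extends_swap_mul_iff hσ h0a.ne h0 h1, extends_swap_iff hσ hb.ne]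

theorem sum_perfectMatchings_map_zero_ne_one {β : Type*} [AddCommMonoid β] {m : ℕ}
    (F : Perm (Fin (m + 2)) → β) :
    ∑ σ ∈ perfectMatchings (m + 2) with σ 0 ≠ 1, F σ =
      ∑ q ∈ univ.filter
          (fun q : Fin (m + 2) × Fin (m + 2) => 1 < (q.1 : ℕ) ∧ (q.1 : ℕ) < q.2),
        (∑ σ ∈ perfectMatchings (m + 2) with σ 0 = q.1 ∧ σ 1 = q.2, F σ +
          ∑ σ ∈ perfectMatchings (m + 2) with σ 0 = q.2 ∧ σ 1 = q.1, F σ) := by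
  have hval : ∀ σ ∈ perfectMatchings (m + 2), σ 0 ≠ 1 →
      1 < (σ 0 : ℕ) ∧ 1 < (σ 1 : ℕ) ∧ (σ 0 : ℕ) ≠ σ 1 := by
    intro σ hσ h01
    obtain ⟨hinv, hfix⟩ := mem_perfectMatchings.1 hσ
    have h10 : σ 1 ≠ 0 := fun h => h01 (by rw [← h, hinv])
    have h00 := hfix 0
    have h11 := hfix 1
    have hne : σ 0 ≠ σ 1 := σ.injective.ne Fin.zero_ne_one
    simp only [ne_eq, Fin.ext_iff, Fin.val_zero, Fin.val_one] at h01 h10 h00 h11 hne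
    omega
  rw [sum_add_distrib, ← sum_filter_add_sum_filter_not _ (fun σ => (σ 0 : ℕ) < σ 1),
    filter_filter, filter_filter]
  congr 1
  · rw [← sum_fiberwise_of_maps_to (g := fun σ => (σ 0, σ 1)) fun σ hσ => ?_]
    · refine sum_congr rfl fun q hq => sum_congr ?_ fun _ _ => rfl
      rw [filter_filter]
      refine filter_congr fun σ _ => ?_
      simp only [mem_filter, mem_univ, true_and] at hq
      simp only [Prod.ext_iff, ne_eq, Fin.ext_iff, Fin.val_one]
      omega
    · simp only [mem_filter, mem_univ, true_and] at hσ ⊢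
      have := hval σ hσ.1 hσ.2.1
      omega
  · rw [← sum_fiberwise_of_maps_to (g := fun σ => (σ 1, σ 0)) fun σ hσ => ?_]
    · refine sum_congr rfl fun q hq => sum_congr ?_ fun _ _ => rfl
      rw [filter_filter]
      refine filter_congr fun σ _ => ?_
      simp only [mem_filter, mem_univ, true_and] at hq
      simp only [Prod.ext_iff, ne_eq, Fin.ext_iff, Fin.val_one]
      omega
    · simp only [mem_filter, mem_univ, true_and] at hσ ⊢
      have := hval σ hσ.1 hσ.2.1
      omega

end Matchings

theorem hafnian_squeeze_expansion_general {R : Type*} [CommRing R] {n : ℕ}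
    (B : Matrix (Fin (2 * n + 2)) (Fin (2 * n + 2)) R) :
    hafnian B =
      B 0 1 * hafnian (B.submatrix (fun i : Fin (2 * n) => i.succ.succ)
          (fun i : Fin (2 * n) => i.succ.succ)) +
        ∑ p : {p : Fin (2 * n + 2) × Fin (2 * n + 2) //
            1 < (p.1 : ℕ) ∧ (p.1 : ℕ) < (p.2 : ℕ)},
          (B 0 p.1.1 * B 1 p.1.2 + B 0 p.1.2 * B 1 p.1.1) *
            hafnian (B.submatrix (delFour p.1.1 p.1.2 p.2.1 p.2.2)
              (delFour p.1.1 p.1.2 p.2.1 p.2.2)) := by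
  rw [hafnian_eq_sum_matchingWeight, ← sum_filter_add_sum_filter_not _ (fun σ => σ 0 = 1),
    sum_matchingWeight_map_zero_eq_one, sum_perfectMatchings_map_zero_ne_one,
    sum_subtype (p := fun q : Fin (2 * n + 2) × Fin (2 * n + 2) =>
      1 < (q.1 : ℕ) ∧ (q.1 : ℕ) < q.2) _ (fun q => by simp)]
  congr 1
  refine Fintype.sum_congr _ _ fun ⟨⟨j, k⟩, hj, hjk⟩ => ?_
  dsimp only at hj hjk ⊢
  have hrange : Set.range (delFour j k hj hjk) = {0, 1, j, k}ᶜ := by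
    rw [delFour, Finset.range_orderEmbOfFin]
    ext x
    simp only [coe_erase, coe_univ, Set.mem_sdiff, Set.mem_univ, Set.mem_singleton_iff,
      Set.mem_compl_iff, Set.mem_insert_iff]
    tauto
  have hj1 : 1 < j := by rwa [Fin.lt_def, Fin.val_one]
  have hk1 : 1 < k := by rw [Fin.lt_def, Fin.val_one]; omega
  have hjk' : j ≠ k := Fin.ne_of_val_ne hjk.ne
  rw [sum_matchingWeight_map_zero_map_one B hj1 hk1 hjk' (delFour j k hj hjk).strictMono hrange,
    sum_matchingWeight_map_zero_map_one B hk1 hj1 hjk'.symm (delFour j k hj hjk).strictMono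
      (by rw [hrange, Set.pair_comm]), add_mul]

/-- The squeeze expansion of the hafnian:
`haf(B) = B_{1,2}·haf(B') + Σ_{2 < j < k} (B_{1,j}B_{2,k} + B_{1,k}B_{2,j})·haf(B'_{jk})`,
where `B'` deletes rows/columns 1,2 and `B'_{jk}` deletes rows/columns 1,2,j,k. -/
theorem hafnian_squeeze_expansion {R : Type*} [CommRing R] {n : ℕ}
    (B : Matrix (Fin (2 * n + 2)) (Fin (2 * n + 2)) R)
    (hsymm : Bᵀ = B) (hdiag : ∀ i, B i i = 0) :
    hafnian B =
      B 0 1 * hafnian (B.submatrix (fun i : Fin (2 * n) => i.succ.succ)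
          (fun i : Fin (2 * n) => i.succ.succ)) +
        ∑ p : {p : Fin (2 * n + 2) × Fin (2 * n + 2) //
            1 < (p.1 : ℕ) ∧ (p.1 : ℕ) < (p.2 : ℕ)},
          (B 0 p.1.1 * B 1 p.1.2 + B 0 p.1.2 * B 1 p.1.1) *
            hafnian (B.submatrix (delFour p.1.1 p.1.2 p.2.1 p.2.2)
              (delFour p.1.1 p.1.2 p.2.1 p.2.2)) :=
  hafnian_squeeze_expansion_general B
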